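/- arXiv:1510.02436 — 8 statements merged into one kernel-verified Lean document; each statement's English description precedes it below -/
import Mathlib

section
/- Let n ≥ 2 and let h : {1,…,n} → {1,…,n} be a Hessenberg function. Then the number of permutations w ∈ S_n satisfying w⁻¹(1) ≤ h(w⁻¹(n)) equals (n−2)!·(∑_{j=1}^{n} h(j) − n). -/
open Finset Equiv

lemma fix_two_count {n : ℕ} (a b : Fin n) (hab : a ≠ b) :
    (univ.filter (fun w : Equiv.Perm (Fin n) => w a = a ∧ w b = b)).card =
      Nat.factorial (n - 2) := by
  classical
  have key : Fintype.card {f : Equiv.Perm (Fin n) // ∀ x, ¬(x ≠ a ∧ x ≠ b) → f x = x}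
      = Nat.factorial (n - 2) := by
    rw [← Fintype.card_congr (Equiv.Perm.subtypeEquivSubtypePerm (fun x : Fin n => x ≠ a ∧ x ≠ b)),
      Fintype.card_perm, Fintype.card_subtype]
    congr 1
    have : (univ.filter fun x : Fin n => x ≠ a ∧ x ≠ b) = (univ.erase a).erase b := by
      ext x; simp [and_comm]
    rw [this, card_erase_of_mem (by simp [Ne.symm hab]), card_erase_of_mem (by simp),
      card_univ, Fintype.card_fin]
    omega
  rw [← key, Fintype.card_subtype]
  congr 1
  ext f
  simp only [mem_filter, mem_univ, true_and]
  constructor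
  · rintro ⟨h1, h2⟩ x hx
    push_neg at hx
    by_cases hxa : x = a
    · subst hxa; exact h1
    · rw [hx hxa]; exact h2
  · intro H
    exact ⟨H a (by simp), H b (by simp)⟩

lemma two_point_count {n : ℕ} (a b c d : Fin n) (hab : a ≠ b) (hcd : c ≠ d) :
    (univ.filter (fun w : Equiv.Perm (Fin n) => w a = c ∧ w b = d)).card =
      Nat.factorial (n - 2) := by
  classical
  set b' := Equiv.swap a c b with hb'
  have hb'c : b' ≠ c := by
    intro hcontra
    apply hab
    exact ((Equiv.swap a c).injective (a₁ := b) (a₂ := a) (by simp [← hb', hcontra])).symm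
  set g : Equiv.Perm (Fin n) := Equiv.swap b' d * Equiv.swap a c with hg
  have hga : g a = c := by
    simp [hg, Equiv.swap_apply_of_ne_of_ne hb'c.symm hcd]
  have hgb : g b = d := by
    simp [hg, ← hb']
  rw [← fix_two_count a b hab]
  apply Finset.card_bij' (fun w _ => g⁻¹ * w) (fun w _ => g * w)
  · intro w hw
    simp only [mem_filter, mem_univ, true_and] at hw ⊢
    simp [Equiv.Perm.mul_apply, hw.1, hw.2, ← hga, ← hgb]
  · intro w hw
    simp only [mem_filter, mem_univ, true_and] at hw ⊢
    simp [Equiv.Perm.mul_apply, hw.1, hw.2, hga, hgb]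
  · intro w _; group
  · intro w _; group

lemma card_fin_lt {n m : ℕ} (hm : m ≤ n) :
    (univ.filter (fun a : Fin n => (a : ℕ) < m)).card = m := by
  have h1 : ∀ k ∈ Finset.range m, k < n := fun k hk => lt_of_lt_of_le (mem_range.mp hk) hm
  have : (univ.filter (fun a : Fin n => (a : ℕ) < m)) = (Finset.range m).attachFin h1 := by
    ext a; simp [Finset.mem_attachFin]
  rw [this, Finset.card_attachFin, Finset.card_range]

lemma inner_card {n m : ℕ} (b : Fin n) (hbm : (b : ℕ) + 1 ≤ m) (hm : m ≤ n) :
    (univ.filter (fun a : Fin n => a ≠ b ∧ (a : ℕ) + 1 ≤ m)).card = m - 1 := by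
  have : (univ.filter (fun a : Fin n => a ≠ b ∧ (a : ℕ) + 1 ≤ m))
      = (univ.filter (fun a : Fin n => (a : ℕ) < m)).erase b := by
    ext a
    simp only [mem_filter, mem_univ, true_and, mem_erase]
    constructor <;> rintro ⟨h1, h2⟩ <;> exact ⟨h1, by omega⟩
  rw [this, card_erase_of_mem (by simp; omega), card_fin_lt hm]

/-- Let n ≥ 2 and let h : {1,…,n} → {1,…,n} be a Hessenberg function
(weakly increasing with h(j) ≥ j). Then the number of permutations w ∈ S_n satisfying
w⁻¹(1) ≤ h(w⁻¹(n)) equals (n−2)!·(∑_{j=1}^{n} h(j) − n).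
Permutations of {1,…,n} are encoded as `Equiv.Perm (Fin n)`, position j ∈ {1,…,n}
corresponding to `(⟨j-1,_⟩ : Fin n)`. -/
theorem stmt_0 (n : ℕ) (hn : 2 ≤ n) (h : ℕ → ℕ)
    (hmono : ∀ i j, 1 ≤ i → i ≤ j → j ≤ n → h i ≤ h j)
    (hdom : ∀ j, 1 ≤ j → j ≤ n → j ≤ h j ∧ h j ≤ n) :
    (Finset.univ.filter (fun w : Equiv.Perm (Fin n) =>
        ((w⁻¹ ⟨0, by omega⟩ : Fin n) : ℕ) + 1 ≤
          h (((w⁻¹ ⟨n - 1, by omega⟩ : Fin n) : ℕ) + 1))).card =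
      Nat.factorial (n - 2) * ((∑ j ∈ Finset.Icc 1 n, h j) - n) := by
  classical
  set z0 : Fin n := ⟨0, by omega⟩ with hz0
  set z1 : Fin n := ⟨n - 1, by omega⟩ with hz1
  have hz : z0 ≠ z1 := by
    intro hcontra
    have : (0 : ℕ) = n - 1 := congrArg Fin.val hcontra
    omega
  set S := Finset.univ.filter (fun w : Equiv.Perm (Fin n) =>
      ((w⁻¹ z0 : Fin n) : ℕ) + 1 ≤ h (((w⁻¹ z1 : Fin n) : ℕ) + 1)) with hS
  have hfib : S.card = ∑ p : Fin n × Fin n,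
      (S.filter (fun w => (w⁻¹ z0, w⁻¹ z1) = p)).card := by
    exact Finset.card_eq_sum_card_fiberwise (fun w _ => mem_univ _)
  have hfibval : ∀ p : Fin n × Fin n,
      (S.filter (fun w => (w⁻¹ z0, w⁻¹ z1) = p)).card =
        if p.1 ≠ p.2 ∧ (p.1 : ℕ) + 1 ≤ h ((p.2 : ℕ) + 1) then Nat.factorial (n - 2) else 0 := by
    rintro ⟨a, b⟩
    by_cases hc : a ≠ b ∧ (a : ℕ) + 1 ≤ h ((b : ℕ) + 1)
    · rw [if_pos hc]
      rw [← two_point_count a b z0 z1 hc.1 hz]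
      congr 1
      ext w
      simp only [hS, Finset.filter_filter, mem_filter, mem_univ, true_and, Prod.mk.injEq]
      constructor
      · rintro ⟨_, h1, h2⟩
        constructor
        · rw [← h1]; simp
        · rw [← h2]; simp
      · rintro ⟨h1, h2⟩
        have e1 : w⁻¹ z0 = a := by rw [← h1]; simp
        have e2 : w⁻¹ z1 = b := by rw [← h2]; simp
        exact ⟨by rw [e1, e2]; exact hc.2, e1, e2⟩
    · rw [if_neg hc, Finset.card_eq_zero, Finset.eq_empty_iff_forall_notMem]
      intro w hw
      simp only [hS, Finset.filter_filter, mem_filter, mem_univ, true_and,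
        Prod.mk.injEq] at hw
      obtain ⟨hP, h1, h2⟩ := hw
      apply hc
      refine ⟨?_, by rw [← h1, ← h2]; exact hP⟩
      intro hab
      exact hz (w⁻¹.injective (by rw [h1, h2, hab]))
  have hsum : ∑ p : Fin n × Fin n,
      (if p.1 ≠ p.2 ∧ (p.1 : ℕ) + 1 ≤ h ((p.2 : ℕ) + 1) then Nat.factorial (n - 2) else 0)
      = ∑ b : Fin n, (h ((b : ℕ) + 1) - 1) * Nat.factorial (n - 2) := by
    rw [Fintype.sum_prod_type_right]
    refine Finset.sum_congr rfl fun b _ => ?_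
    have hb1 : (b : ℕ) + 1 ≤ n := b.isLt
    obtain ⟨hd1, hd2⟩ := hdom ((b : ℕ) + 1) (by omega) hb1
    rw [← Finset.sum_filter, Finset.sum_const, smul_eq_mul,
      inner_card b hd1 hd2]
  have hIcc : ∑ j ∈ Finset.Icc 1 n, h j = ∑ i ∈ Finset.range n, h (1 + i) := by
    rw [← Finset.Ico_add_one_right_eq_Icc, Finset.sum_Ico_eq_sum_range]
    simp
  have hfin : ∑ b : Fin n, (h ((b : ℕ) + 1) - 1) = (∑ j ∈ Finset.Icc 1 n, h j) - n := by
    rw [Fin.sum_univ_eq_sum_range (fun j => h (j + 1) - 1) n, hIcc]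
    have key : ∑ i ∈ Finset.range n, h (1 + i)
        = (∑ i ∈ Finset.range n, (h (i + 1) - 1)) + n := by
      have step : ∑ i ∈ Finset.range n, h (1 + i)
          = ∑ i ∈ Finset.range n, ((h (i + 1) - 1) + 1) := by
        refine Finset.sum_congr rfl fun i hi => ?_
        have h1 := (hdom (i + 1) (by omega) (by simpa using mem_range.mp hi)).1
        rw [add_comm 1 i]
        omega
      rw [step, Finset.sum_add_distrib, Finset.sum_const, Finset.card_range, smul_eq_mul, mul_one]
    omega
  rw [hfib]
  simp_rw [hfibval]
  rw [hsum, ← Finset.sum_mul, hfin, mul_comm]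
end

section
/- Let n ≥ 2 and let i, j, k, l ∈ {1,…,n} with i ≠ j and k ≠ l, and suppose either (i < j and k < l) or (i > j and k > l). Then (k ≤ i and j ≤ l) if and only if w_{k,l} ≤ w_{i,j} in the Bruhat order. (This is the type-A statement that for roots β = t_i − t_j and γ = t_k − t_l of sl_n of the same sign, β ≤ γ in the root order if and only if w_γ ≤ w_β.) -/
/-- The Bruhat order on S_n, via its combinatorial characterization:
u ≤ v iff |{a ∈ {1,…,i} : u(a) ≥ j}| ≤ |{a ∈ {1,…,i} : v(a) ≥ j}| for all i, j ∈ {1,…,n}.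
Permutations are encoded on `Fin n` (position j ∈ {1,…,n} corresponds to `⟨j-1,_⟩`). -/
def BruhatLE {n : ℕ} (u v : Equiv.Perm (Fin n)) : Prop :=
  ∀ i j : Fin n,
    (Finset.univ.filter (fun a : Fin n => a ≤ i ∧ j ≤ u a)).card ≤
    (Finset.univ.filter (fun a : Fin n => a ≤ i ∧ j ≤ v a)).card

/-- Strict Bruhat order: u < v iff u ≤ v and u ≠ v. -/
def BruhatLT {n : ℕ} (u v : Equiv.Perm (Fin n)) : Prop :=
  BruhatLE u v ∧ u ≠ v

/-- `IsWij i j w` says that w is the permutation w_{i,j}: w(i) = 1, w(j) = n, and the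
values at the remaining positions, in increasing order of position, are n−1, n−2, …, 2
(equivalently: strictly decreasing); w_{i,j} is the longest permutation with
w(i) = 1, w(j) = n. Encoded on `Fin n`: value v ∈ {1,…,n} corresponds to `⟨v-1,_⟩`. -/
def IsWij {n : ℕ} (i j : Fin n) (w : Equiv.Perm (Fin n)) : Prop :=
  (w i : ℕ) = 0 ∧ (w j : ℕ) = n - 1 ∧
    ∀ a b : Fin n, a < b → a ≠ i → a ≠ j → b ≠ i → b ≠ j → w b < w a

open Finset

theorem two_downclosed {α : Type*} [LinearOrder α] [DecidableEq α]
    (A B : Finset α)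
    (hA : ∀ a ∈ A, ∀ b ∈ B, b ≤ a → b ∈ A)
    (hB : ∀ a ∈ B, ∀ b ∈ A, b ≤ a → b ∈ B) :
    (A ∩ B).card = min A.card B.card := by
  by_cases h : A ⊆ B
  · rw [inter_eq_left.mpr h, min_eq_left (card_le_card h)]
  · obtain ⟨a, haA, haB⟩ := not_subset.mp h
    have hBA : B ⊆ A := by
      intro b hb
      rcases le_total b a with h' | h'
      · exact hA a haA b hb h'
      · exact absurd (hB b hb a haA h') haB
    rw [inter_eq_right.mpr hBA, min_eq_right (card_le_card hBA)]

theorem wij_count {n : ℕ} (hn : 2 ≤ n) {i j : Fin n} (hij : i ≠ j)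
    {w : Equiv.Perm (Fin n)} (hw : IsWij i j w) (p q : Fin n) (hq : 1 ≤ (q : ℕ)) :
    (univ.filter (fun a : Fin n => a ≤ p ∧ q ≤ w a)).card
      = (if (j:ℕ) ≤ (p:ℕ) then 1 else 0) +
        min ((p:ℕ) + 1 - (if (i:ℕ) ≤ (p:ℕ) then 1 else 0) - (if (j:ℕ) ≤ (p:ℕ) then 1 else 0))
          (n - 1 - (q:ℕ)) := by
  obtain ⟨hwi, hwj, hdec⟩ := hw
  set A := univ.filter (fun a : Fin n => (a ≠ i ∧ a ≠ j) ∧ q ≤ w a) with hAdef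
  set B := univ.filter (fun a : Fin n => (a ≠ i ∧ a ≠ j) ∧ a ≤ p) with hBdef
  -- card A
  have himg : A.image w = Finset.Icc q ⟨n - 2, by omega⟩ := by
    ext x
    simp only [hAdef, mem_image, mem_filter, mem_univ, true_and, Finset.mem_Icc]
    constructor
    · rintro ⟨a, ⟨⟨hai, haj⟩, hqa⟩, rfl⟩
      have h1 : (w a : ℕ) ≠ 0 := by
        intro h
        exact hai (w.injective (Fin.val_injective (by omega : (w a : ℕ) = (w i : ℕ))))
      have h2 : (w a : ℕ) ≠ n - 1 := by
        intro h
        exact haj (w.injective (Fin.val_injective (by omega : (w a : ℕ) = (w j : ℕ))))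
      rw [Fin.le_def] at hqa ⊢
      refine ⟨hqa, ?_⟩
      simp only [Fin.le_def]
      have := (w a).isLt
      omega
    · rintro ⟨h1, h2⟩
      rw [Fin.le_def] at h1
      rw [Fin.le_def] at h2
      simp only [] at h2
      refine ⟨w.symm x, ⟨⟨?_, ?_⟩, ?_⟩, w.apply_symm_apply x⟩
      · intro h
        have : x = w i := by rw [← h, w.apply_symm_apply]
        rw [this] at h1
        omega
      · intro h
        have : x = w j := by rw [← h, w.apply_symm_apply]
        rw [this] at h2
        omega
      · rw [Fin.le_def, w.apply_symm_apply]; exact h1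
  have hcardA : A.card = n - 1 - (q:ℕ) := by
    rw [← Finset.card_image_of_injective A w.injective, himg, Fin.card_Icc]
    simp only [Fin.val_mk]
    omega
  -- card B
  have hcardB : B.card = (p:ℕ) + 1 - (if (i:ℕ) ≤ (p:ℕ) then 1 else 0)
      - (if (j:ℕ) ≤ (p:ℕ) then 1 else 0) := by
    have hsplit := Finset.card_filter_add_card_filter_not
      (s := univ.filter (fun a : Fin n => a ≤ p)) (p := fun a => a ≠ i ∧ a ≠ j)
    have hBeq : (univ.filter (fun a : Fin n => a ≤ p)).filter (fun a => a ≠ i ∧ a ≠ j) = B := by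
      ext a; simp [hBdef]; tauto
    have hIic : (univ.filter (fun a : Fin n => a ≤ p)).card = (p:ℕ) + 1 := by
      have : univ.filter (fun a : Fin n => a ≤ p) = Iic p := by
        ext a; simp
      rw [this, Fin.card_Iic]
    have hneg : (univ.filter (fun a : Fin n => a ≤ p)).filter (fun a => ¬(a ≠ i ∧ a ≠ j))
        = ({i, j} : Finset (Fin n)).filter (fun a => a ≤ p) := by
      ext a; simp only [mem_filter, mem_univ, true_and, mem_insert, mem_singleton]; tauto
    have hcardneg : (({i, j} : Finset (Fin n)).filter (fun a => a ≤ p)).card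
        = (if (i:ℕ) ≤ (p:ℕ) then 1 else 0) + (if (j:ℕ) ≤ (p:ℕ) then 1 else 0) := by
      simp only [show ({i, j} : Finset (Fin n)) = insert i {j} from rfl, filter_insert,
        filter_singleton]
      simp only [show (i ≤ p) = ((i:ℕ) ≤ (p:ℕ)) from propext Fin.le_def,
        show (j ≤ p) = ((j:ℕ) ≤ (p:ℕ)) from propext Fin.le_def]
      split_ifs with h1 h2 h2
      · rw [card_insert_of_notMem (by simp [hij]), card_singleton]
      · rw [card_insert_of_notMem (by simp), card_empty]
      · rw [card_singleton]
      · rw [card_empty]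
    rw [hBeq, hneg, hcardneg, hIic] at hsplit
    omega
  -- min
  have hmin : (A ∩ B).card = min A.card B.card := by
    apply two_downclosed
    · intro a ha b hb hba
      simp only [hAdef, hBdef, mem_filter, mem_univ, true_and] at ha hb ⊢
      refine ⟨hb.1, ?_⟩
      rcases eq_or_lt_of_le hba with rfl | hlt
      · exact ha.2
      · exact le_of_lt (lt_of_le_of_lt ha.2 (hdec b a hlt hb.1.1 hb.1.2 ha.1.1 ha.1.2))
    · intro a ha b hb hba
      simp only [hAdef, hBdef, mem_filter, mem_univ, true_and] at ha hb ⊢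
      exact ⟨hb.1, le_trans hba ha.2⟩
  have hGAB : univ.filter (fun a : Fin n => (a ≤ p ∧ q ≤ w a) ∧ a ≠ i ∧ a ≠ j) = A ∩ B := by
    ext a
    simp only [hAdef, hBdef, mem_inter, mem_filter, mem_univ, true_and]
    tauto
  have hiq : ¬ q ≤ w i := by rw [Fin.le_def, hwi]; omega
  have hjq : q ≤ w j := by rw [Fin.le_def, hwj]; have := q.isLt; omega
  by_cases hjp : j ≤ p
  · have hjp' : (j:ℕ) ≤ (p:ℕ) := Fin.le_def.mp hjp
    have hF : univ.filter (fun a : Fin n => a ≤ p ∧ q ≤ w a)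
        = insert j (univ.filter (fun a : Fin n => (a ≤ p ∧ q ≤ w a) ∧ a ≠ i ∧ a ≠ j)) := by
      ext a
      simp only [mem_insert, mem_filter, mem_univ, true_and]
      constructor
      · rintro ⟨h1, h2⟩
        by_cases haj : a = j
        · exact Or.inl haj
        · refine Or.inr ⟨⟨h1, h2⟩, ?_, haj⟩
          rintro rfl; exact hiq h2
      · rintro (rfl | ⟨h, _⟩)
        · exact ⟨hjp, hjq⟩
        · exact h
    rw [hF, card_insert_of_notMem (by simp), hGAB, hmin, hcardA, hcardB]
    rw [if_pos hjp']
    omega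
  · have hjp' : ¬ (j:ℕ) ≤ (p:ℕ) := fun h => hjp (Fin.le_def.mpr h)
    have hF : univ.filter (fun a : Fin n => a ≤ p ∧ q ≤ w a)
        = univ.filter (fun a : Fin n => (a ≤ p ∧ q ≤ w a) ∧ a ≠ i ∧ a ≠ j) := by
      ext a
      simp only [mem_filter, mem_univ, true_and]
      constructor
      · rintro ⟨h1, h2⟩
        refine ⟨⟨h1, h2⟩, ?_, ?_⟩
        · rintro rfl; exact hiq h2
        · rintro rfl; exact hjp h1
      · rintro ⟨h, _⟩; exact h
    rw [hF, hGAB, hmin, hcardA, hcardB]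
    rw [if_neg hjp']
    omega


/-- Let n ≥ 2 and i, j, k, l ∈ {1,…,n} with i ≠ j, k ≠ l, and either
(i < j and k < l) or (i > j and k > l). Then (k ≤ i and j ≤ l) iff w_{k,l} ≤ w_{i,j}
in the Bruhat order. Positions are encoded on `Fin n`. -/
theorem stmt_9 (n : ℕ) (hn : 2 ≤ n) (i j k l : Fin n) (hij : i ≠ j) (hkl : k ≠ l)
    (hsign : (i < j ∧ k < l) ∨ (j < i ∧ l < k))
    (u v : Equiv.Perm (Fin n)) (hu : IsWij k l u) (hv : IsWij i j v) :
    (k ≤ i ∧ j ≤ l) ↔ BruhatLE u v := by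
  have hi := i.isLt
  have hj := j.isLt
  have hk := k.isLt
  have hl := l.isLt
  constructor
  · rintro ⟨hki, hjl⟩ p q
    have hki' : (k:ℕ) ≤ (i:ℕ) := Fin.le_def.mp hki
    have hjl' : (j:ℕ) ≤ (l:ℕ) := Fin.le_def.mp hjl
    by_cases hq : 1 ≤ (q:ℕ)
    · rw [wij_count hn hkl hu p q hq, wij_count hn hij hv p q hq]
      split_ifs <;> omega
    · have h0 : ∀ (w : Equiv.Perm (Fin n)),
          univ.filter (fun a : Fin n => a ≤ p ∧ q ≤ w a)
            = univ.filter (fun a : Fin n => a ≤ p) := by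
        intro w
        ext a
        simp only [mem_filter, mem_univ, true_and, and_iff_left_iff_imp]
        intro _
        rw [Fin.le_def]
        omega
      rw [h0 u, h0 v]
  · intro hle
    rcases hsign with ⟨hs1, hs2⟩ | ⟨hs1, hs2⟩
    · have hIJ : (i:ℕ) < (j:ℕ) := Fin.lt_def.mp hs1
      have hKL : (k:ℕ) < (l:ℕ) := Fin.lt_def.mp hs2
      constructor
      · rw [Fin.le_def]
        by_contra hik
        push_neg at hik
        have hspec := hle i (⟨n - 2 - (i:ℕ), by omega⟩ : Fin n)
        rw [wij_count hn hkl hu _ _ (by simp only [Fin.val_mk]; omega),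
            wij_count hn hij hv _ _ (by simp only [Fin.val_mk]; omega)] at hspec
        simp only [Fin.val_mk] at hspec
        split_ifs at hspec <;> omega
      · rw [Fin.le_def]
        by_contra hlj
        push_neg at hlj
        have hspec := hle l (⟨n - (l:ℕ), by omega⟩ : Fin n)
        rw [wij_count hn hkl hu _ _ (by simp only [Fin.val_mk]; omega),
            wij_count hn hij hv _ _ (by simp only [Fin.val_mk]; omega)] at hspec
        simp only [Fin.val_mk] at hspec
        split_ifs at hspec <;> omega
    · have hJI : (j:ℕ) < (i:ℕ) := Fin.lt_def.mp hs1
      have hLK : (l:ℕ) < (k:ℕ) := Fin.lt_def.mp hs2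
      constructor
      · rw [Fin.le_def]
        by_contra hik
        push_neg at hik
        have hspec := hle i (⟨1, by omega⟩ : Fin n)
        rw [wij_count hn hkl hu _ _ (by simp only [Fin.val_mk]; omega),
            wij_count hn hij hv _ _ (by simp only [Fin.val_mk]; omega)] at hspec
        simp only [Fin.val_mk] at hspec
        split_ifs at hspec <;> omega
      · rw [Fin.le_def]
        by_contra hlj
        push_neg at hlj
        have hspec := hle l (⟨n - 1 - (l:ℕ), by omega⟩ : Fin n)
        rw [wij_count hn hkl hu _ _ (by simp only [Fin.val_mk]; omega),
            wij_count hn hij hv _ _ (by simp only [Fin.val_mk]; omega)] at hspec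
        simp only [Fin.val_mk] at hspec
        split_ifs at hspec <;> omega
end

section
/- Let n ≥ 2 and let i, j ∈ {1,…,n−1} be distinct. Then the permutations w_{i,i+1} and w_{j,j+1} are incomparable in the Bruhat order: neither w_{i,i+1} ≤ w_{j,j+1} nor w_{j,j+1} ≤ w_{i,i+1} holds. -/
/-- If u has value n−1 at position i and v has value n−1 at position j with i < j,
then u ≰ v (witness: columns up to i, values ≥ n−1). -/
lemma aux_not_le (n i j : ℕ) (hn : 2 ≤ n) (hlt : i < j) (hj' : j ≤ n - 1)
    (u v : Equiv.Perm (Fin n))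
    (hu : (u ⟨i, by omega⟩ : ℕ) = n - 1) (hv : (v ⟨j, by omega⟩ : ℕ) = n - 1) :
    ¬ BruhatLE u v := by
  intro h
  have hin : i < n := by omega
  have hjn : j < n := by omega
  have hn1 : n - 1 < n := by omega
  have hu' : (u ⟨i, hin⟩ : ℕ) = n - 1 := hu
  have hv' : (v ⟨j, hjn⟩ : ℕ) = n - 1 := hv
  have h2 := h ⟨i, hin⟩ ⟨n - 1, hn1⟩
  have hmem : (⟨i, hin⟩ : Fin n) ∈ Finset.univ.filter
      (fun a : Fin n => a ≤ ⟨i, hin⟩ ∧ (⟨n - 1, hn1⟩ : Fin n) ≤ u a) := by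
    refine Finset.mem_filter.mpr ⟨Finset.mem_univ _, le_refl _, ?_⟩
    show n - 1 ≤ (u ⟨i, hin⟩ : ℕ)
    omega
  have hcard1 : 1 ≤ (Finset.univ.filter
      (fun a : Fin n => a ≤ ⟨i, hin⟩ ∧ (⟨n - 1, hn1⟩ : Fin n) ≤ u a)).card :=
    Finset.card_pos.mpr ⟨_, hmem⟩
  have hcard0 : (Finset.univ.filter
      (fun a : Fin n => a ≤ ⟨i, hin⟩ ∧ (⟨n - 1, hn1⟩ : Fin n) ≤ v a)).card = 0 := by
    rw [Finset.card_eq_zero, Finset.filter_eq_empty_iff]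
    intro a _ hp
    obtain ⟨hle, hge⟩ := hp
    have hle' : (a : ℕ) ≤ i := hle
    have hge' : n - 1 ≤ (v a : ℕ) := hge
    have hva : (v a : ℕ) = n - 1 := by have := (v a).isLt; omega
    have haj : a = ⟨j, hjn⟩ := v.injective (Fin.ext (by rw [hva, hv']))
    rw [haj] at hle'
    exact absurd (show j ≤ i from hle') (by omega)
  omega

/-- If u has value 0 at position i−1 and v has value 0 at position j−1 with i < j,
then v ≰ u (witness: columns up to i−1, values ≥ 1). -/
lemma aux_not_ge (n i j : ℕ) (hn : 2 ≤ n) (hi : 1 ≤ i) (hlt : i < j) (hj' : j ≤ n - 1)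
    (u v : Equiv.Perm (Fin n))
    (hu : (u ⟨i - 1, by omega⟩ : ℕ) = 0) (hv : (v ⟨j - 1, by omega⟩ : ℕ) = 0) :
    ¬ BruhatLE v u := by
  intro h
  have hi1 : i - 1 < n := by omega
  have hj1 : j - 1 < n := by omega
  have h1n : 1 < n := by omega
  have hu' : (u ⟨i - 1, hi1⟩ : ℕ) = 0 := hu
  have hv' : (v ⟨j - 1, hj1⟩ : ℕ) = 0 := hv
  have h2 := h ⟨i - 1, hi1⟩ ⟨1, h1n⟩
  have hsub :
      (Finset.univ.filter (fun a : Fin n => a ≤ ⟨i-1, hi1⟩ ∧ (⟨1, h1n⟩ : Fin n) ≤ u a)) ⊂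
      (Finset.univ.filter (fun a : Fin n => a ≤ ⟨i-1, hi1⟩ ∧ (⟨1, h1n⟩ : Fin n) ≤ v a)) := by
    constructor
    · intro a ha
      obtain ⟨-, hle, -⟩ := Finset.mem_filter.mp ha
      refine Finset.mem_filter.mpr ⟨Finset.mem_univ _, hle, ?_⟩
      show 1 ≤ (v a : ℕ)
      have hne : a ≠ ⟨j - 1, hj1⟩ := by
        intro hEq
        have hle2 : (⟨j-1, hj1⟩ : Fin n) ≤ (⟨i-1, hi1⟩ : Fin n) := hEq ▸ hle
        exact absurd (show j - 1 ≤ i - 1 from hle2) (by omega)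
      have hne2 : v a ≠ v ⟨j - 1, hj1⟩ := fun hEq => hne (v.injective hEq)
      have hva : (v a : ℕ) ≠ 0 := fun h0 => hne2 (Fin.ext (by rw [h0, hv']))
      omega
    · intro hsub'
      have hmem : (⟨i-1, hi1⟩ : Fin n) ∈ Finset.univ.filter
          (fun a : Fin n => a ≤ ⟨i-1, hi1⟩ ∧ (⟨1, h1n⟩ : Fin n) ≤ v a) := by
        refine Finset.mem_filter.mpr ⟨Finset.mem_univ _, le_refl _, ?_⟩
        show 1 ≤ (v ⟨i-1, hi1⟩ : ℕ)
        have hne : (⟨i-1, hi1⟩ : Fin n) ≠ ⟨j - 1, hj1⟩ :=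
          Fin.ne_of_val_ne (show i - 1 ≠ j - 1 by omega)
        have hne2 : v ⟨i-1, hi1⟩ ≠ v ⟨j - 1, hj1⟩ := fun hEq => hne (v.injective hEq)
        have hva : (v ⟨i-1, hi1⟩ : ℕ) ≠ 0 := fun h0 => hne2 (Fin.ext (by rw [h0, hv']))
        omega
      obtain ⟨-, -, hge⟩ := Finset.mem_filter.mp (hsub' hmem)
      have : 1 ≤ (u ⟨i-1, hi1⟩ : ℕ) := hge
      omega
  have := Finset.card_lt_card hsub
  omega

/-- Let n ≥ 2 and let i, j ∈ {1,…,n−1} be distinct. Then w_{i,i+1} and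
w_{j,j+1} are incomparable in the Bruhat order. Position p ∈ {1,…,n} is encoded as
`⟨p-1,_⟩ : Fin n`. -/
theorem stmt_10 (n : ℕ) (hn : 2 ≤ n) (i j : ℕ)
    (hi : 1 ≤ i) (hi' : i ≤ n - 1) (hj : 1 ≤ j) (hj' : j ≤ n - 1) (hij : i ≠ j)
    (u v : Equiv.Perm (Fin n))
    (hu : IsWij ⟨i - 1, by omega⟩ ⟨i, by omega⟩ u)
    (hv : IsWij ⟨j - 1, by omega⟩ ⟨j, by omega⟩ v) :
    ¬ BruhatLE u v ∧ ¬ BruhatLE v u := by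
  rcases lt_or_gt_of_ne hij with hlt | hlt
  · exact ⟨aux_not_le n i j hn hlt hj' u v hu.2.1 hv.2.1,
      aux_not_ge n i j hn hi hlt hj' u v hu.1 hv.1⟩
  · exact ⟨aux_not_ge n j i hn hj hlt hi' v u hv.1 hu.1,
      aux_not_le n j i hn hlt hi' v u hv.2.1 hu.2.1⟩
end

section
/- Let n ≥ 2 and let h : {1,…,n} → {1,…,n} be a Hessenberg function. If (k,ℓ) and (k',ℓ') are distinct minimal negative Hessenberg pairs, then w_{k,ℓ} and w_{k',ℓ'} are incomparable in the Bruhat order: neither w_{k,ℓ} ≤ w_{k',ℓ'} nor w_{k',ℓ'} ≤ w_{k,ℓ} holds. -/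
/-- (k,ℓ) is a negative Hessenberg pair for h: ℓ < k ≤ h(ℓ) (corresponding to the
negative Hessenberg root t_k − t_ℓ). Positions are encoded on `Fin n`
(position p ∈ {1,…,n} corresponds to `⟨p-1,_⟩`). -/
def NegPair {n : ℕ} (h : ℕ → ℕ) (k l : Fin n) : Prop :=
  l < k ∧ (k : ℕ) + 1 ≤ h ((l : ℕ) + 1)

/-- A negative Hessenberg pair (k,ℓ) is minimal if there is no negative Hessenberg
pair (k',ℓ') ≠ (k,ℓ) with k ≤ k' and ℓ' ≤ ℓ. -/
def MinNegPair {n : ℕ} (h : ℕ → ℕ) (k l : Fin n) : Prop :=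
  NegPair h k l ∧
    ∀ k' l' : Fin n, NegPair h k' l' → k ≤ k' → l' ≤ l → k' = k ∧ l' = l

lemma not_le_aux1 {n : ℕ} (l l' : Fin n) (hll : l < l')
    (u v : Equiv.Perm (Fin n)) (hul : (u l : ℕ) = n - 1) (hvl : (v l' : ℕ) = n - 1) :
    ¬ BruhatLE u v := by
  intro H
  have hj : n - 1 < n := Nat.sub_lt (Nat.pos_of_ne_zero (by rintro rfl; exact absurd l.isLt (by simp))) one_pos
  have hcard := H l ⟨n - 1, hj⟩
  have hv0 : (Finset.univ.filter fun a : Fin n => a ≤ l ∧ (⟨n - 1, hj⟩ : Fin n) ≤ v a) = ∅ := by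
    rw [Finset.filter_eq_empty_iff]
    rintro a -
    rintro ⟨ha1, ha2⟩
    rw [Fin.le_def] at ha2
    simp only [Fin.val_mk] at ha2
    have hlt := (v a).isLt
    have hva : (v a : ℕ) = n - 1 := by omega
    have haa : a = l' := v.injective (Fin.ext (by rw [hva, hvl]))
    subst haa
    exact absurd (lt_of_le_of_lt ha1 hll) (lt_irrefl _)
  have hl : l ∈ Finset.univ.filter fun a : Fin n => a ≤ l ∧ (⟨n - 1, hj⟩ : Fin n) ≤ u a := by
    simp only [Finset.mem_filter, Finset.mem_univ, true_and]
    exact ⟨le_refl _, by rw [Fin.le_def, hul]⟩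
  rw [hv0] at hcard
  simp only [Finset.card_empty, Nat.le_zero, Finset.card_eq_zero] at hcard
  rw [hcard] at hl
  exact absurd hl (Finset.notMem_empty _)

lemma not_le_aux2 {n : ℕ} (hn : 2 ≤ n) (k k' : Fin n) (hkk : k < k')
    (u v : Equiv.Perm (Fin n)) (huk : (u k : ℕ) = 0) (hvk : (v k' : ℕ) = 0) :
    ¬ BruhatLE v u := by
  intro H
  have h1 : (1 : ℕ) < n := by omega
  have hcard := H k ⟨1, h1⟩
  have hsub : (Finset.univ.filter fun a : Fin n => a ≤ k ∧ (⟨1, h1⟩ : Fin n) ≤ u a) ⊆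
      (Finset.univ.filter fun a : Fin n => a ≤ k ∧ (⟨1, h1⟩ : Fin n) ≤ v a) := by
    intro a ha
    simp only [Finset.mem_filter, Finset.mem_univ, true_and] at ha ⊢
    refine ⟨ha.1, ?_⟩
    rw [Fin.le_def]
    by_contra hc
    push_neg at hc
    simp only [Fin.val_mk] at hc
    have hva : (v a : ℕ) = 0 := by omega
    have haa : a = k' := v.injective (Fin.ext (by rw [hva, hvk]))
    subst haa
    exact absurd (lt_of_le_of_lt ha.1 hkk) (lt_irrefl _)
  have hkmem : k ∈ Finset.univ.filter fun a : Fin n => a ≤ k ∧ (⟨1, h1⟩ : Fin n) ≤ v a := by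
    simp only [Finset.mem_filter, Finset.mem_univ, true_and]
    refine ⟨le_refl _, ?_⟩
    rw [Fin.le_def]
    by_contra hc
    push_neg at hc
    simp only [Fin.val_mk] at hc
    have hvk0 : (v k : ℕ) = 0 := by omega
    have : k = k' := v.injective (Fin.ext (by rw [hvk0, hvk]))
    exact absurd hkk (by rw [this]; exact lt_irrefl _)
  have hknot : k ∉ Finset.univ.filter fun a : Fin n => a ≤ k ∧ (⟨1, h1⟩ : Fin n) ≤ u a := by
    simp only [Finset.mem_filter, Finset.mem_univ, true_and]
    rintro ⟨-, hle⟩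
    rw [Fin.le_def, huk] at hle
    simp only [Fin.val_mk] at hle
    omega
  have hss := (Finset.ssubset_iff_of_subset hsub).mpr ⟨k, hkmem, hknot⟩
  exact absurd hcard (not_le_of_gt (Finset.card_lt_card hss))

/-- Let n ≥ 2 and h a Hessenberg function. If (k,ℓ) and (k',ℓ') are
distinct minimal negative Hessenberg pairs, then w_{k,ℓ} and w_{k',ℓ'} are
incomparable in the Bruhat order. -/
theorem stmt_11 (n : ℕ) (hn : 2 ≤ n) (h : ℕ → ℕ)
    (hmono : ∀ i j, 1 ≤ i → i ≤ j → j ≤ n → h i ≤ h j)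
    (hdom : ∀ j, 1 ≤ j → j ≤ n → j ≤ h j ∧ h j ≤ n)
    (k l k' l' : Fin n) (hk : MinNegPair h k l) (hk' : MinNegPair h k' l')
    (hne : (k, l) ≠ (k', l'))
    (u v : Equiv.Perm (Fin n)) (hu : IsWij k l u) (hv : IsWij k' l' v) :
    ¬ BruhatLE u v ∧ ¬ BruhatLE v u := by
  obtain ⟨hu0, hu1, -⟩ := hu
  obtain ⟨hv0, hv1, -⟩ := hv
  have h1 : ¬ ((k : Fin n) ≤ k' ∧ l' ≤ l) := by
    rintro ⟨ha, hb⟩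
    obtain ⟨he1, he2⟩ := hk.2 k' l' hk'.1 ha hb
    exact hne (by rw [he1, he2])
  have h2 : ¬ ((k' : Fin n) ≤ k ∧ l ≤ l') := by
    rintro ⟨ha, hb⟩
    obtain ⟨he1, he2⟩ := hk'.2 k l hk.1 ha hb
    exact hne (by rw [he1, he2])
  rcases lt_trichotomy k k' with hkk | hkk | hkk
  · have hll : l < l' := by
      by_contra hc
      exact h1 ⟨le_of_lt hkk, not_lt.mp hc⟩
    exact ⟨not_le_aux1 l l' hll u v hu1 hv1, not_le_aux2 hn k k' hkk u v hu0 hv0⟩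
  · exfalso
    rcases le_or_gt l l' with hll | hll
    · exact h2 ⟨le_of_eq hkk.symm, hll⟩
    · exact h1 ⟨le_of_eq hkk, le_of_lt hll⟩
  · have hll : l' < l := by
      by_contra hc
      exact h2 ⟨le_of_lt hkk, not_lt.mp hc⟩
    exact ⟨not_le_aux2 hn k' k hkk v u hv0 hu0, not_le_aux1 l' l hll v u hv1 hu1⟩
end

section
/- Let n ≥ 2 and let h : {1,…,n} → {1,…,n} be a Hessenberg function. Suppose i, j ∈ {1,…,n} are distinct with either i < j or (i,j) a negative Hessenberg pair, and suppose w_{i,j} is a maximal element of Ω_H. Then either i = j − 1 (so that t_i − t_j is a simple root of sl_n) or (i,j) is a minimal negative Hessenberg pair. -/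
/-- Membership in Ω_H = {w_{k,ℓ} : k < ℓ} ∪ {w_{k,ℓ} : (k,ℓ) a negative Hessenberg pair}. -/
def InOmega {n : ℕ} (h : ℕ → ℕ) (u : Equiv.Perm (Fin n)) : Prop :=
  ∃ k l : Fin n, (k < l ∨ NegPair h k l) ∧ IsWij k l u

/-- m is a maximal element of Ω_H: m ∈ Ω_H and there is no u ∈ Ω_H with m < u
in the Bruhat order. -/
def MaxInOmega {n : ℕ} (h : ℕ → ℕ) (m : Equiv.Perm (Fin n)) : Prop :=
  InOmega h m ∧ ∀ u : Equiv.Perm (Fin n), InOmega h u → ¬ BruhatLT m u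

/-!
Right multiplication by a transposition `(x y)` with `x < y` and `u x < u y` goes up in the
Bruhat order. Sliding the value `1` of `w_{A,B}` one position to the right (jumping over the
position `B` if it is in the way) is such a multiplication and yields `w_{A',B}`; symmetrically
for sliding the value `n` to the left. Hence `w_{i,j} ≤ w_{k,l}` whenever `i ≤ k`, `l ≤ j` and
`k ∉ {j, l}`. For a maximal `w_{i,j}` this rules out `(k, l) = (j - 1, j)` when `i + 1 < j`, and
every negative Hessenberg pair `(k, l) ≠ (i, j)` with `i ≤ k`, `l ≤ j` when `(i, j)` is one.
-/

open Equiv Finset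

section
variable {n : ℕ}

theorem bruhatLE_refl (u : Perm (Fin n)) : BruhatLE u u :=
  fun _ _ => le_rfl

theorem BruhatLE.trans {u v w : Perm (Fin n)} (huv : BruhatLE u v) (hvw : BruhatLE v w) :
    BruhatLE u w :=
  fun i j => (huv i j).trans (hvw i j)

theorem bruhatLE_mul_swap_of_lt {u : Perm (Fin n)} {x y : Fin n} (hxy : x < y)
    (hu : u x ≤ u y) : BruhatLE u (u * swap x y) := by
  classical
  intro i j
  rw [card_filter, card_filter,
    ← Equiv.sum_comp (swap x y) (fun a => if a ≤ i ∧ j ≤ (u * swap x y) a then 1 else 0)]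
  simp only [Perm.mul_apply, swap_apply_self]
  rw [← sum_add_sum_compl {x, y},
    ← sum_add_sum_compl {x, y} (fun a => if swap x y a ≤ i ∧ _ then _ else _),
    sum_pair hxy.ne, sum_pair hxy.ne, swap_apply_left, swap_apply_right]
  have hout : ∑ a ∈ {x, y}ᶜ, (if swap x y a ≤ i ∧ j ≤ u a then 1 else 0)
      = ∑ a ∈ {x, y}ᶜ, (if a ≤ i ∧ j ≤ u a then 1 else 0) :=
    sum_congr rfl fun a ha => by
      simp only [mem_compl, mem_insert, mem_singleton, not_or] at ha
      rw [swap_apply_of_ne_of_ne ha.1 ha.2]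
  have hxi : y ≤ i → x ≤ i := hxy.le.trans
  have hjy : j ≤ u x → j ≤ u y := (·.trans hu)
  rw [hout]
  split_ifs <;> omega

namespace IsWij

variable {A B : Fin n} {u : Perm (Fin n)}

theorem eq_of_isWij {A' B' : Fin n} (hu : IsWij A B u) (hu' : IsWij A' B' u) :
    A = A' ∧ B = B' :=
  ⟨u.injective (Fin.ext (hu.1.trans hu'.1.symm)),
    u.injective (Fin.ext (hu.2.1.trans hu'.2.1.symm))⟩

theorem mul_swap_left {A' : Fin n} (hu : IsWij A B u) (hAB : A ≠ B) (hAA' : A < A')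
    (hA'B : A' ≠ B) (hbetween : ∀ c, A < c → c < A' → c = B) :
    IsWij A' B (u * swap A A') := by
  obtain ⟨hA, hB, hdec⟩ := hu
  refine ⟨by simp [hA], by simp [swap_apply_of_ne_of_ne hAB.symm hA'B.symm, hB], ?_⟩
  intro a b hab haA' haB hbA' hbB
  have hmono : swap A A' a < swap A A' b := by
    by_cases haA : a = A
    · subst haA
      have hA'b : A' < b := lt_of_le_of_ne
        (not_lt.mp fun hbA' => hbB (hbetween b hab hbA')) (Ne.symm hbA')
      rwa [swap_apply_left, swap_apply_of_ne_of_ne hab.ne' hbA']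
    by_cases hbA : b = A
    · subst hbA
      rw [swap_apply_left, swap_apply_of_ne_of_ne haA haA']
      exact hab.trans hAA'
    rwa [swap_apply_of_ne_of_ne haA haA', swap_apply_of_ne_of_ne hbA hbA']
  have hσ : ∀ c, c ≠ A' → c ≠ B → swap A A' c ≠ A ∧ swap A A' c ≠ B := fun c hcA' hcB =>
    ⟨by rwa [Ne, swap_apply_eq_iff, swap_apply_left],
      by rwa [Ne, swap_apply_eq_iff, swap_apply_of_ne_of_ne hAB.symm hA'B.symm]⟩
  exact hdec _ _ hmono (hσ a haA' haB).1 (hσ a haA' haB).2 (hσ b hbA' hbB).1 (hσ b hbA' hbB).2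

theorem mul_swap_right {B' : Fin n} (hu : IsWij A B u) (hAB : A ≠ B) (hB'B : B' < B)
    (hB'A : B' ≠ A) (hbetween : ∀ c, B' < c → c < B → c = A) :
    IsWij A B' (u * swap B' B) := by
  obtain ⟨hA, hB, hdec⟩ := hu
  refine ⟨by simp [swap_apply_of_ne_of_ne hB'A.symm hAB, hA], by simp [hB], ?_⟩
  intro a b hab haA haB' hbA hbB'
  have hmono : swap B' B a < swap B' B b := by
    by_cases hbB : b = B
    · subst hbB
      have haltB' : a < B' := lt_of_le_of_ne
        (not_lt.mp fun hB'a => haA (hbetween a hB'a hab)) haB'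
      rwa [swap_apply_right, swap_apply_of_ne_of_ne haB' hab.ne]
    by_cases haB : a = B
    · subst haB
      rw [swap_apply_right, swap_apply_of_ne_of_ne hbB' hbB]
      exact hB'B.trans hab
    rwa [swap_apply_of_ne_of_ne haB' haB, swap_apply_of_ne_of_ne hbB' hbB]
  have hσ : ∀ c, c ≠ A → c ≠ B' → swap B' B c ≠ A ∧ swap B' B c ≠ B := fun c hcA hcB' =>
    ⟨by rwa [Ne, swap_apply_eq_iff, swap_apply_of_ne_of_ne hB'A.symm hAB],
      by rwa [Ne, swap_apply_eq_iff, swap_apply_right]⟩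
  exact hdec _ _ hmono (hσ a haA haB').1 (hσ a haA haB').2 (hσ b hbA hbB').1 (hσ b hbA hbB').2

theorem exists_bruhatLE_of_le_left {A' : Fin n} (hu : IsWij A B u) (hAB : A ≠ B)
    (hAA' : A ≤ A') (hA'B : A' ≠ B) : ∃ v, IsWij A' B v ∧ BruhatLE u v := by
  classical
  induction A using WellFoundedGT.induction generalizing u with
  | _ A ih =>
  rcases hAA'.eq_or_lt with rfl | hlt
  · exact ⟨u, hu, bruhatLE_refl u⟩
  let S := univ.filter fun c => A < c ∧ c ≠ B
  have hA'S : A' ∈ S := by simp [S, hlt, hA'B]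
  obtain ⟨hAA₁, hA₁B⟩ : A < S.min' ⟨A', hA'S⟩ ∧ S.min' ⟨A', hA'S⟩ ≠ B := by
    simpa [S] using S.min'_mem ⟨A', hA'S⟩
  have hbetween : ∀ c, A < c → c < S.min' ⟨A', hA'S⟩ → c = B := fun c hAc hc =>
    by_contra fun hcB => (S.min'_le c (by simp [S, hAc, hcB])).not_gt hc
  obtain ⟨v, hv, huv⟩ := ih _ hAA₁ (hu.mul_swap_left hAB hAA₁ hA₁B hbetween) hA₁B
    (S.min'_le A' hA'S)
  exact ⟨v, hv, (bruhatLE_mul_swap_of_lt hAA₁ (by simp [Fin.le_def, hu.1])).trans huv⟩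

theorem exists_bruhatLE_of_le_right {B' : Fin n} (hu : IsWij A B u) (hAB : A ≠ B)
    (hB'B : B' ≤ B) (hB'A : B' ≠ A) : ∃ v, IsWij A B' v ∧ BruhatLE u v := by
  classical
  induction B using WellFoundedLT.induction generalizing u with
  | _ B ih =>
  rcases hB'B.eq_or_lt with rfl | hlt
  · exact ⟨u, hu, bruhatLE_refl u⟩
  let S := univ.filter fun c => c < B ∧ c ≠ A
  have hB'S : B' ∈ S := by simp [S, hlt, hB'A]
  obtain ⟨hB₁B, hB₁A⟩ : S.max' ⟨B', hB'S⟩ < B ∧ S.max' ⟨B', hB'S⟩ ≠ A := by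
    simpa [S] using S.max'_mem ⟨B', hB'S⟩
  have hbetween : ∀ c, S.max' ⟨B', hB'S⟩ < c → c < B → c = A := fun c hc hcB =>
    by_contra fun hcA => (S.le_max' c (by simp [S, hcB, hcA])).not_gt hc
  obtain ⟨v, hv, huv⟩ := ih _ hB₁B (hu.mul_swap_right hAB hB₁B hB₁A hbetween) hB₁A.symm
    (S.le_max' B' hB'S)
  exact ⟨v, hv, (bruhatLE_mul_swap_of_lt hB₁B (by simp [Fin.le_def, hu.2.1]; omega)).trans huv⟩

theorem exists_bruhatLE {A' B' : Fin n} (hu : IsWij A B u) (hAB : A ≠ B) (hAA' : A ≤ A')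
    (hB'B : B' ≤ B) (hA'B : A' ≠ B) (hA'B' : A' ≠ B') : ∃ v, IsWij A' B' v ∧ BruhatLE u v := by
  obtain ⟨v, hv, huv⟩ := hu.exists_bruhatLE_of_le_left hAB hAA' hA'B
  obtain ⟨v', hv', hvv'⟩ := hv.exists_bruhatLE_of_le_right hA'B hB'B hA'B'.symm
  exact ⟨v', hv', huv.trans hvv'⟩

end IsWij

theorem MaxInOmega.eq_of_isWij {h : ℕ → ℕ} {i j k l : Fin n} {w : Perm (Fin n)}
    (hmax : MaxInOmega h w) (hw : IsWij i j w) (hij : i ≠ j) (hkl : k < l ∨ NegPair h k l)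
    (hik : i ≤ k) (hlj : l ≤ j) (hkj : k ≠ j) : k = i ∧ l = j := by
  have hkl' : k ≠ l := hkl.elim ne_of_lt fun hneg => hneg.1.ne'
  obtain ⟨v, hv, hwv⟩ := hw.exists_bruhatLE hij hik hlj hkj hkl'
  by_contra hne
  refine hmax.2 v ⟨k, l, hkl, hv⟩ ⟨hwv, fun hwv' => hne ?_⟩
  obtain ⟨rfl, rfl⟩ := hw.eq_of_isWij (hwv' ▸ hv)
  exact ⟨rfl, rfl⟩

end

theorem stmt_12_general (n : ℕ) (h : ℕ → ℕ)
    (i j : Fin n) (hij : i ≠ j) (hcase : i < j ∨ NegPair h i j)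
    (w : Equiv.Perm (Fin n)) (hw : IsWij i j w) (hmax : MaxInOmega h w) :
    (i : ℕ) + 1 = (j : ℕ) ∨ MinNegPair h i j := by
  rcases hcase with hlt | hneg
  · left
    rw [Fin.lt_def] at hlt
    let k : Fin n := ⟨j - 1, by omega⟩
    have hkj : k < j := by simp [k, Fin.lt_def]; omega
    have hik : i ≤ k := by simp [k, Fin.le_def]; omega
    have hki : k = i := (hmax.eq_of_isWij hw hij (Or.inl hkj) hik le_rfl hkj.ne).1
    have := congrArg Fin.val hki
    simp only [k] at this
    omega
  · right
    exact ⟨hneg, fun k l hkl hik hlj =>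
      hmax.eq_of_isWij hw hij (Or.inr hkl) hik hlj (hneg.1.trans_le hik).ne'⟩

/-- Let n ≥ 2, h a Hessenberg function, and i, j distinct positions with
either i < j or (i,j) a negative Hessenberg pair. If w_{i,j} is a maximal element of
Ω_H, then either i = j − 1 (t_i − t_j is a simple root) or (i,j) is a minimal negative
Hessenberg pair. Position p ∈ {1,…,n} is encoded as `⟨p-1,_⟩ : Fin n`, so "i = j − 1"
reads `(i : ℕ) + 1 = (j : ℕ)`. -/
theorem stmt_12 (n : ℕ) (hn : 2 ≤ n) (h : ℕ → ℕ)
    (hmono : ∀ i j, 1 ≤ i → i ≤ j → j ≤ n → h i ≤ h j)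
    (hdom : ∀ j, 1 ≤ j → j ≤ n → j ≤ h j ∧ h j ≤ n)
    (i j : Fin n) (hij : i ≠ j) (hcase : i < j ∨ NegPair h i j)
    (w : Equiv.Perm (Fin n)) (hw : IsWij i j w) (hmax : MaxInOmega h w) :
    (i : ℕ) + 1 = (j : ℕ) ∨ MinNegPair h i j :=
  stmt_12_general n h i j hij hcase w hw hmax
end

section
/- Let n ≥ 2, let 2 ≤ j ≤ n, and let k, ℓ ∈ {1,…,n} with k > ℓ. Then it is not the case that w_{k,ℓ} < w_{j−1,j} in the Bruhat order. (This is the type-A statement that w_γ is not strictly below w_α for any simple root α and negative root γ.) -/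
/-- Let n ≥ 2, 2 ≤ j ≤ n, and k, ℓ ∈ {1,…,n} with k > ℓ. Then it is not
the case that w_{k,ℓ} < w_{j−1,j} in the Bruhat order (the type-A statement that w_γ
is never strictly below w_α for a simple root α and negative root γ).
Position p ∈ {1,…,n} is encoded as `⟨p-1,_⟩ : Fin n`. -/
theorem stmt_14 (n : ℕ) (hn : 2 ≤ n) (j : ℕ) (hj : 2 ≤ j) (hj' : j ≤ n)
    (k l : Fin n) (hkl : l < k)
    (u v : Equiv.Perm (Fin n))
    (hu : IsWij k l u)
    (hv : IsWij ⟨j - 2, by omega⟩ ⟨j - 1, by omega⟩ v) :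
    ¬ BruhatLT u v := by
  rintro ⟨hle, -⟩
  by_cases hc : (l : ℕ) < j - 1
  · -- use i = l, threshold = n-1
    have h := hle l ⟨n - 1, by omega⟩
    have hufil : (Finset.univ.filter (fun a : Fin n => a ≤ l ∧ (⟨n-1, by omega⟩ : Fin n) ≤ u a))
        = {l} := by
      ext a
      simp only [Finset.mem_filter, Finset.mem_univ, true_and, Finset.mem_singleton]
      constructor
      · rintro ⟨ha, hva⟩
        have h1 : n - 1 ≤ (u a : ℕ) := hva
        have h2 : (u a : ℕ) < n := (u a).isLt
        have : (u a : ℕ) = (u l : ℕ) := by rw [hu.2.1]; omega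
        exact u.injective (Fin.ext this)
      · intro ha
        subst ha
        exact ⟨le_refl _, hu.2.1.ge⟩
    have hvfil : (Finset.univ.filter (fun a : Fin n => a ≤ l ∧ (⟨n-1, by omega⟩ : Fin n) ≤ v a))
        = ∅ := by
      rw [Finset.eq_empty_iff_forall_notMem]
      intro a ha
      simp only [Finset.mem_filter, Finset.mem_univ, true_and] at ha
      obtain ⟨ha1, ha2⟩ := ha
      have h1 : n - 1 ≤ (v a : ℕ) := ha2
      have h2 : (v a : ℕ) < n := (v a).isLt
      have : (v a : ℕ) = (v ⟨j - 1, by omega⟩ : ℕ) := by rw [hv.2.1]; omega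
      have ha3 : a = (⟨j - 1, by omega⟩ : Fin n) := v.injective (Fin.ext this)
      have : (a : ℕ) ≤ (l : ℕ) := ha1
      rw [ha3] at this
      simp at this
      omega
    rw [hufil, hvfil] at h
    simp at h
  · -- l ≥ j - 1, so k > j - 2; use i = ⟨j-2⟩, threshold = 1
    have hk2 : j - 2 < (k : ℕ) := by
      have := hkl
      rw [Fin.lt_def] at this
      omega
    set i : Fin n := ⟨j - 2, by omega⟩ with hi
    set t : Fin n := ⟨1, by omega⟩ with ht
    have h := hle i t
    have hne : ∀ a : Fin n, (a : ℕ) ≤ j - 2 → (1 : ℕ) ≤ (u a : ℕ) := by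
      intro a ha
      by_contra hcon
      have h0 : (u a : ℕ) = 0 := by omega
      have : (u a : ℕ) = (u k : ℕ) := by rw [hu.1]; exact h0
      have := u.injective (Fin.ext this)
      subst this
      omega
    have hsub : (Finset.univ.filter (fun a : Fin n => a ≤ i ∧ t ≤ v a)) ⊂
        (Finset.univ.filter (fun a : Fin n => a ≤ i ∧ t ≤ u a)) := by
      constructor
      · intro a ha
        simp only [Finset.mem_filter, Finset.mem_univ, true_and] at ha ⊢
        exact ⟨ha.1, hne a (by exact_mod_cast ha.1)⟩
      · intro hcon
        have hmem : i ∈ (Finset.univ.filter (fun a : Fin n => a ≤ i ∧ t ≤ u a)) := by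
          simp only [Finset.mem_filter, Finset.mem_univ, true_and]
          exact ⟨le_refl _, hne i (le_refl _)⟩ 
        have := hcon hmem
        simp only [Finset.mem_filter, Finset.mem_univ, true_and] at this
        have h1 : (1 : ℕ) ≤ (v i : ℕ) := this.2
        rw [hv.1] at h1
        omega
    have := Finset.card_lt_card hsub
    omega
end

section
/- Let n ≥ 2, let h : {1,…,n} → {1,…,n} be a Hessenberg function with modified Hessenberg function h̄, and let 2 ≤ j ≤ n. Then (j−1, j) is a corner of the modified Hessenberg stair shape if and only if there is no negative Hessenberg pair (k,ℓ) with w_{j−1,j} < w_{k,ℓ} in the Bruhat order. -/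
/-- The modified Hessenberg function h̄ of a Hessenberg function h (with the
convention h(0) = 0): h̄(j) = j−1 if h(j−1) = j−1 and h(j) = j, and h̄(j) = h(j) otherwise. -/
def hbar (h : ℕ → ℕ) (j : ℕ) : ℕ :=
  if h (j - 1) = j - 1 ∧ h j = j then j - 1 else h j

/-- (i,j) is a corner of the modified Hessenberg stair shape: i = h̄(j) and
h̄(j−1) < h̄(j) (with the convention h̄(0) = 0, automatic here since h(0) = 0). -/
def StairCorner (h : ℕ → ℕ) (i j : ℕ) : Prop :=
  i = hbar h j ∧ hbar h (j - 1) < hbar h j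

namespace Stmt15
open Finset

variable {n : ℕ}

lemma card_filter_val (P : ℕ → Prop) [DecidablePred P] :
    (Finset.univ.filter (fun v : Fin n => P v.val)).card = ((Finset.range n).filter P).card := by
  apply Finset.card_bij (fun a _ => a.val)
  · intro a ha; simp only [mem_filter, mem_range, mem_univ, true_and] at ha ⊢
    exact ⟨a.isLt, ha⟩
  · intro a _ b _ hab; exact Fin.val_injective hab
  · intro b hb; simp only [mem_filter, mem_range] at hb
    exact ⟨⟨b, hb.1⟩, by simp [hb.2], rfl⟩

/-- number of positions `< a` avoiding I and J -/
def dd (I J a : Fin n) : ℕ :=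
  (Finset.univ.filter (fun b : Fin n => b < a ∧ b ≠ I ∧ b ≠ J)).card

lemma dd_lt {I J a b : Fin n} (hab : a < b) (haI : a ≠ I) (haJ : a ≠ J) :
    dd I J a < dd I J b := by
  apply Finset.card_lt_card
  constructor
  · intro c hc; simp only [mem_filter, mem_univ, true_and] at hc ⊢
    exact ⟨hc.1.trans hab, hc.2⟩
  · intro hsub
    have := hsub (by simp [haI, haJ, hab] : a ∈ Finset.univ.filter
      (fun c : Fin n => c < b ∧ c ≠ I ∧ c ≠ J))
    simp at this



lemma ne_of_isWij {I J : Fin n} {w : Equiv.Perm (Fin n)} (hn : 2 ≤ n) (hw : IsWij I J w) :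
    I ≠ J := by
  intro hIJ
  obtain ⟨h1, h2, -⟩ := hw
  rw [hIJ] at h1; omega

lemma w_spec {I J : Fin n} {w : Equiv.Perm (Fin n)} (hn : 2 ≤ n) (hw : IsWij I J w)
    {a : Fin n} (haI : a ≠ I) (haJ : a ≠ J) :
    dd I J a + (w a : ℕ) = n - 2 ∧ 1 ≤ (w a : ℕ) := by
  obtain ⟨hI, hJ, hdec⟩ := hw
  have hwa1 : 1 ≤ (w a : ℕ) := by
    have : w a ≠ w I := fun h => haI (w.injective h)
    rw [← Fin.val_ne_iff] at this; omega
  have hwa2 : (w a : ℕ) ≤ n - 2 := by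
    have : w a ≠ w J := fun h => haJ (w.injective h)
    rw [← Fin.val_ne_iff] at this
    have := (w a).isLt; omega
  refine ⟨?_, hwa1⟩
  -- S1 has cardinality dd a + 1
  have key1 : (Finset.univ.filter (fun b : Fin n => b ≤ a ∧ b ≠ I ∧ b ≠ J)).card
      = dd I J a + 1 := by
    have : Finset.univ.filter (fun b : Fin n => b ≤ a ∧ b ≠ I ∧ b ≠ J)
        = insert a (Finset.univ.filter (fun b : Fin n => b < a ∧ b ≠ I ∧ b ≠ J)) := by
      ext b
      simp only [mem_filter, mem_univ, true_and, mem_insert]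
      constructor
      · rintro ⟨hba, hI', hJ'⟩
        rcases eq_or_lt_of_le hba with h | h
        · exact Or.inl h
        · exact Or.inr ⟨h, hI', hJ'⟩
      · rintro (rfl | ⟨h, hI', hJ'⟩)
        · exact ⟨le_refl _, haI, haJ⟩
        · exact ⟨le_of_lt h, hI', hJ'⟩
    rw [this, Finset.card_insert_of_notMem (by simp), dd]
  -- S1 as value set
  have key2 : Finset.univ.filter (fun b : Fin n => b ≤ a ∧ b ≠ I ∧ b ≠ J)
      = Finset.univ.filter (fun b : Fin n => b ≠ I ∧ b ≠ J ∧ w a ≤ w b) := by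
    ext b
    simp only [mem_filter, mem_univ, true_and]
    constructor
    · rintro ⟨hba, hI', hJ'⟩
      refine ⟨hI', hJ', ?_⟩
      rcases eq_or_lt_of_le hba with rfl | h
      · exact le_refl _
      · exact le_of_lt (hdec b a h hI' hJ' haI haJ)
    · rintro ⟨hI', hJ', hw'⟩
      refine ⟨?_, hI', hJ'⟩
      by_contra hab
      push_neg at hab
      exact absurd hw' (not_le.mpr (hdec a b hab haI haJ hI' hJ'))
  -- value set via image
  have key3 : (Finset.univ.filter (fun b : Fin n => b ≠ I ∧ b ≠ J ∧ w a ≤ w b)).card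
      = (Finset.univ.filter (fun v : Fin n => v ≠ w I ∧ v ≠ w J ∧ w a ≤ v)).card := by
    rw [show (Finset.univ.filter (fun v : Fin n => v ≠ w I ∧ v ≠ w J ∧ w a ≤ v))
        = (Finset.univ.image w).filter (fun v : Fin n => v ≠ w I ∧ v ≠ w J ∧ w a ≤ v) by
      rw [Finset.image_univ_equiv]]
    rw [Finset.filter_image]
    rw [Finset.card_image_of_injective _ w.injective]
    congr 1
    ext b
    simp only [mem_filter, mem_univ, true_and, ne_eq, EmbeddingLike.apply_eq_iff_eq]
  have key4 : (Finset.univ.filter (fun v : Fin n => v ≠ w I ∧ v ≠ w J ∧ w a ≤ v)).card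
      = n - 1 - (w a : ℕ) := by
    have : ∀ v : Fin n, (v ≠ w I ∧ v ≠ w J ∧ w a ≤ v) ↔
        ((v : ℕ) ≠ 0 ∧ (v : ℕ) ≠ n - 1 ∧ (w a : ℕ) ≤ (v : ℕ)) := by
      intro v
      rw [← Fin.val_ne_iff, ← Fin.val_ne_iff, hI, hJ, Fin.le_def]
    rw [Finset.filter_congr (fun v _ => by rw [this v])]
    rw [card_filter_val (fun x => x ≠ 0 ∧ x ≠ n - 1 ∧ (w a : ℕ) ≤ x)]
    have : (Finset.range n).filter (fun x => x ≠ 0 ∧ x ≠ n - 1 ∧ (w a : ℕ) ≤ x)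
        = Finset.Ico (w a : ℕ) (n - 1) := by
      ext x
      simp only [mem_filter, mem_range, Finset.mem_Ico]
      omega
    rw [this, Nat.card_Ico]
  have : dd I J a + 1 = n - 1 - (w a : ℕ) := by rw [← key1, key2, key3, key4]
  omega


lemma dd_add_three_le {I J a : Fin n} (hIJ : I ≠ J) (haI : a ≠ I) (haJ : a ≠ J) :
    dd I J a + 3 ≤ n := by
  have h1 : Finset.univ.filter (fun b : Fin n => b < a ∧ b ≠ I ∧ b ≠ J) ⊆
      ((Finset.univ.erase I).erase J).erase a := by
    intro b hb
    simp only [mem_filter, mem_univ, true_and, mem_erase, ne_eq] at hb ⊢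
    have := ne_of_lt hb.1
    tauto
  have h2 := Finset.card_le_card h1
  rw [Finset.card_erase_of_mem (by simp [haI, haJ]),
    Finset.card_erase_of_mem (by simp [hIJ.symm]),
    Finset.card_erase_of_mem (by simp)] at h2
  simp only [Finset.card_univ, Fintype.card_fin] at h2
  have hn3 : 3 ≤ n := by
    have h3 := a.isLt; have h4 := I.isLt; have h5 := J.isLt
    have e1 : (a : ℕ) ≠ I := by rwa [Fin.val_ne_iff]
    have e2 : (a : ℕ) ≠ J := by rwa [Fin.val_ne_iff]
    have e3 : (I : ℕ) ≠ J := by rwa [Fin.val_ne_iff]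
    omega
  rw [dd]; omega

lemma card_CC {I J : Fin n} (hIJ : I ≠ J) :
    (Finset.univ.filter (fun a : Fin n => a ≠ I ∧ a ≠ J)).card = n - 2 := by
  have : Finset.univ.filter (fun a : Fin n => a ≠ I ∧ a ≠ J)
      = (Finset.univ.erase I).erase J := by
    ext a
    simp only [mem_filter, mem_univ, true_and, mem_erase, ne_eq]
    tauto
  rw [this, Finset.card_erase_of_mem (by simp [hIJ.symm]),
    Finset.card_erase_of_mem (by simp)]
  simp only [Finset.card_univ, Fintype.card_fin]
  omega

lemma card_dd_lt {I J : Fin n} (hIJ : I ≠ J) {r : ℕ} (hr : r ≤ n - 2) :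
    (Finset.univ.filter (fun a : Fin n => (a ≠ I ∧ a ≠ J) ∧ dd I J a < r)).card = r := by
  classical
  set C := Finset.univ.filter (fun a : Fin n => a ≠ I ∧ a ≠ J) with hC
  have hCcard : C.card = n - 2 := card_CC hIJ
  have hinjC : Set.InjOn (dd I J) C := by
    intro a ha b hb hab
    simp only [hC, coe_filter, mem_univ, true_and, Set.mem_setOf_eq] at ha hb
    rcases lt_trichotomy a b with h | h | h
    · exact absurd hab (ne_of_lt (dd_lt h ha.1 ha.2))
    · exact h
    · exact absurd hab.symm (ne_of_lt (dd_lt h hb.1 hb.2))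
  have himage : C.image (dd I J) = Finset.range (n - 2) := by
    apply Finset.eq_of_subset_of_card_le
    · intro x hx
      simp only [mem_image] at hx
      obtain ⟨a, ha, rfl⟩ := hx
      simp only [hC, mem_filter, mem_univ, true_and] at ha
      have := dd_add_three_le hIJ ha.1 ha.2
      simp only [mem_range]; omega
    · rw [Finset.card_range, Finset.card_image_of_injOn hinjC, hCcard]
  have hfc : Finset.univ.filter (fun a : Fin n => (a ≠ I ∧ a ≠ J) ∧ dd I J a < r)
      = C.filter (fun a => dd I J a < r) := by
    ext a; simp [hC, and_assoc]
  have hinj2 : Set.InjOn (dd I J) ↑(C.filter (fun a => dd I J a < r)) := by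
    intro x hx y hy hxy
    exact hinjC (Finset.mem_coe.mpr (Finset.mem_of_mem_filter _ (Finset.mem_coe.mp hx)))
      (Finset.mem_coe.mpr (Finset.mem_of_mem_filter _ (Finset.mem_coe.mp hy))) hxy
  have him2 : (C.filter (fun a => dd I J a < r)).image (dd I J)
      = (Finset.range (n - 2)).filter (fun x => x < r) := by
    rw [← himage, Finset.filter_image]
  have hrange : (Finset.range (n - 2)).filter (fun x => x < r) = Finset.range r := by
    ext x; simp only [mem_filter, mem_range]; omega
  rw [hfc, ← Finset.card_image_of_injOn hinj2, him2, hrange, Finset.card_range]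

lemma card_prefix (i : Fin n) :
    (Finset.univ.filter (fun a : Fin n => a ≤ i)).card = (i : ℕ) + 1 := by
  have : Finset.univ.filter (fun a : Fin n => a ≤ i)
      = Finset.univ.filter (fun a : Fin n => (a : ℕ) ≤ (i : ℕ)) := by
    ext a; simp only [mem_filter, mem_univ, true_and, Fin.le_def]
  rw [this, card_filter_val (fun x => x ≤ (i : ℕ))]
  have : (Finset.range n).filter (fun x => x ≤ (i : ℕ)) = Finset.range ((i : ℕ) + 1) := by
    ext x
    simp only [mem_filter, mem_range]
    have := i.isLt; omega
  rw [this, Finset.card_range]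

lemma ci_eq (I J i : Fin n) (hIJ : I ≠ J) :
    (Finset.univ.filter (fun a : Fin n => a ≤ i ∧ a ≠ I ∧ a ≠ J)).card
      = (i : ℕ) + 1 - (if I ≤ i then 1 else 0) - (if J ≤ i then 1 else 0) := by
  have hset : Finset.univ.filter (fun a : Fin n => a ≤ i ∧ a ≠ I ∧ a ≠ J)
      = ((Finset.univ.filter (fun a : Fin n => a ≤ i)).erase I).erase J := by
    ext a
    simp only [mem_filter, mem_univ, true_and, mem_erase, ne_eq]
    tauto
  rw [hset, Finset.card_erase_eq_ite, Finset.card_erase_eq_ite]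
  by_cases hI : I ≤ i <;> by_cases hJ : J ≤ i <;>
    simp [hI, hJ, hIJ.symm, card_prefix i]

lemma dd_lt_ci_iff {I J a i : Fin n} (haI : a ≠ I) (haJ : a ≠ J) :
    a ≤ i ↔ dd I J a <
      (Finset.univ.filter (fun b : Fin n => b ≤ i ∧ b ≠ I ∧ b ≠ J)).card := by
  constructor
  · intro hai
    apply Finset.card_lt_card
    refine ⟨fun c hc => ?_, fun hsub => ?_⟩
    · simp only [mem_filter, mem_univ, true_and] at hc ⊢
      exact ⟨le_trans (le_of_lt hc.1) hai, hc.2⟩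
    · have := hsub (show a ∈ Finset.univ.filter
        (fun b : Fin n => b ≤ i ∧ b ≠ I ∧ b ≠ J) by simp [hai, haI, haJ])
      simp at this
  · intro hlt
    by_contra hai
    push_neg at hai
    have hle : (Finset.univ.filter (fun b : Fin n => b ≤ i ∧ b ≠ I ∧ b ≠ J)).card
        ≤ dd I J a := by
      apply Finset.card_le_card
      intro c hc
      simp only [mem_filter, mem_univ, true_and] at hc ⊢
      exact ⟨lt_of_le_of_lt hc.1 hai, hc.2⟩
    omega
lemma rank_eq {I J : Fin n} {w : Equiv.Perm (Fin n)} (hn : 2 ≤ n) (hw : IsWij I J w)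
    (i m : Fin n) (hm : 1 ≤ (m : ℕ)) :
    (Finset.univ.filter (fun a : Fin n => a ≤ i ∧ m ≤ w a)).card =
      (if J ≤ i then 1 else 0) +
        min ((i : ℕ) + 1 - (if I ≤ i then 1 else 0) - (if J ≤ i then 1 else 0))
          (n - 1 - (m : ℕ)) := by
  classical
  have hIJ : I ≠ J := ne_of_isWij hn hw
  set ci := (Finset.univ.filter (fun b : Fin n => b ≤ i ∧ b ≠ I ∧ b ≠ J)).card with hci
  have hcile : ci ≤ n - 2 := by
    rw [hci]
    calc (Finset.univ.filter (fun b : Fin n => b ≤ i ∧ b ≠ I ∧ b ≠ J)).card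
        ≤ (Finset.univ.filter (fun b : Fin n => b ≠ I ∧ b ≠ J)).card := by
          apply Finset.card_le_card
          intro c hc
          simp only [mem_filter, mem_univ, true_and] at hc ⊢
          exact hc.2
      _ = n - 2 := card_CC hIJ
  have hsplit := Finset.card_filter_add_card_filter_not
    (s := Finset.univ.filter (fun a : Fin n => a ≤ i ∧ m ≤ w a))
    (p := fun a => a = J)
  have hfirst : (Finset.univ.filter (fun a : Fin n => a ≤ i ∧ m ≤ w a)).filter
      (fun a => a = J) = if J ≤ i then {J} else ∅ := by
    have hmJ : m ≤ w J := by
      rw [Fin.le_def, hw.2.1]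
      have := m.isLt; omega
    ext a
    by_cases hJi : J ≤ i
    · simp only [mem_filter, mem_univ, true_and, hJi, if_true, Finset.mem_singleton]
      constructor
      · rintro ⟨-, rfl⟩; rfl
      · rintro rfl; exact ⟨⟨hJi, hmJ⟩, rfl⟩
    · simp only [mem_filter, mem_univ, true_and, hJi, if_false,
        Finset.notMem_empty, iff_false]
      rintro ⟨⟨hai, -⟩, rfl⟩
      exact hJi hai
  have hsecond : (Finset.univ.filter (fun a : Fin n => a ≤ i ∧ m ≤ w a)).filter
      (fun a => ¬ a = J)
      = Finset.univ.filter (fun a : Fin n =>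
          (a ≠ I ∧ a ≠ J) ∧ dd I J a < min ci (n - 1 - (m : ℕ))) := by
    ext a
    simp only [mem_filter, mem_univ, true_and, ne_eq]
    constructor
    · rintro ⟨⟨hai, hma⟩, haJ⟩
      have haI : a ≠ I := by
        rintro rfl
        rw [Fin.le_def, hw.1] at hma
        omega
      obtain ⟨hspec, hwa1⟩ := w_spec hn hw haI haJ
      refine ⟨⟨haI, haJ⟩, lt_min ?_ ?_⟩
      · exact (dd_lt_ci_iff haI haJ).mp hai
      · rw [Fin.le_def] at hma
        have := m.isLt; omega
    · rintro ⟨⟨haI, haJ⟩, hdd⟩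
      obtain ⟨hspec, hwa1⟩ := w_spec hn hw haI haJ
      rw [lt_min_iff] at hdd
      refine ⟨⟨(dd_lt_ci_iff haI haJ).mpr hdd.1, ?_⟩, haJ⟩
      rw [Fin.le_def]
      have := m.isLt; omega
  have hsc : ((Finset.univ.filter (fun a : Fin n => a ≤ i ∧ m ≤ w a)).filter
      (fun a => ¬ a = J)).card = min ci (n - 1 - (m : ℕ)) := by
    rw [hsecond]
    exact card_dd_lt hIJ (by omega)
  have hfc : ((Finset.univ.filter (fun a : Fin n => a ≤ i ∧ m ≤ w a)).filter
      (fun a => a = J)).card = if J ≤ i then 1 else 0 := by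
    rw [hfirst]
    by_cases hJi : J ≤ i <;> simp [hJi]
  have hcival : ci = (i : ℕ) + 1 - (if I ≤ i then 1 else 0) - (if J ≤ i then 1 else 0) :=
    ci_eq I J i hIJ
  omega
lemma exists_wij (hn : 2 ≤ n) (I J : Fin n) (hIJ : I ≠ J) :
    ∃ w : Equiv.Perm (Fin n), IsWij I J w := by
  have hnpos : 0 < n := by omega
  set f : Fin n → Fin n := fun a =>
    if a = I then ⟨0, hnpos⟩ else if a = J then ⟨n - 1, by omega⟩
    else ⟨n - 2 - dd I J a, by omega⟩ with hf
  have hfI : (f I : ℕ) = 0 := by simp [hf]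
  have hfJ : (f J : ℕ) = n - 1 := by simp [hf, hIJ.symm]
  have hfval : ∀ a, a ≠ I → a ≠ J → (f a : ℕ) = n - 2 - dd I J a := by
    intro a haI haJ; simp [hf, haI, haJ]
  have hval0 : ∀ a, a ≠ I → a ≠ J → 1 ≤ (f a : ℕ) ∧ (f a : ℕ) ≤ n - 2 := by
    intro a haI haJ
    rw [hfval a haI haJ]
    have := dd_add_three_le hIJ haI haJ
    omega
  have hinj : Function.Injective f := by
    intro a b hab
    have hv : (f a : ℕ) = (f b : ℕ) := congrArg Fin.val hab
    by_cases haI : a = I <;> by_cases hbI : b = I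
    · rw [haI, hbI]
    · exfalso
      subst haI
      rw [hfI] at hv
      by_cases hbJ : b = J
      · subst hbJ; rw [hfJ] at hv; omega
      · have := hval0 b hbI hbJ; omega
    · exfalso
      subst hbI
      rw [hfI] at hv
      by_cases haJ : a = J
      · subst haJ; rw [hfJ] at hv; omega
      · have := hval0 a haI haJ; omega
    · by_cases haJ : a = J <;> by_cases hbJ : b = J
      · rw [haJ, hbJ]
      · exfalso; subst haJ; rw [hfJ] at hv
        have := hval0 b hbI hbJ; omega
      · exfalso; subst hbJ; rw [hfJ] at hv
        have := hval0 a haI haJ; omega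
      · rw [hfval a haI haJ, hfval b hbI hbJ] at hv
        have ha3 := dd_add_three_le hIJ haI haJ
        have hb3 := dd_add_three_le hIJ hbI hbJ
        have hdd : dd I J a = dd I J b := by omega
        rcases lt_trichotomy a b with h | h | h
        · exact absurd hdd (ne_of_lt (dd_lt h haI haJ))
        · exact h
        · exact absurd hdd.symm (ne_of_lt (dd_lt h hbI hbJ))
  refine ⟨Equiv.ofBijective f (Finite.injective_iff_bijective.mp hinj), ?_, ?_, ?_⟩
  · show (f I : ℕ) = 0; exact hfI
  · show (f J : ℕ) = n - 1; exact hfJ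
  · intro a b hab haI haJ hbI hbJ
    show f b < f a
    rw [Fin.lt_def, hfval a haI haJ, hfval b hbI hbJ]
    have := dd_lt hab haI haJ
    have := dd_add_three_le hIJ hbI hbJ
    omega

lemma bruhatLE_of (hn : 2 ≤ n) {j : ℕ} (hj : 2 ≤ j) (hj' : j ≤ n)
    {k l : Fin n} (hkl : l < k) (hl : (l : ℕ) ≤ j - 1) (hk : j - 2 ≤ (k : ℕ))
    {u v : Equiv.Perm (Fin n)}
    (hu : IsWij ⟨j - 2, by omega⟩ ⟨j - 1, by omega⟩ u) (hv : IsWij k l v) :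
    BruhatLE u v := by
  intro i m
  by_cases hm : (m : ℕ) = 0
  · have he : ∀ x : Equiv.Perm (Fin n),
        Finset.univ.filter (fun a : Fin n => a ≤ i ∧ m ≤ x a)
          = Finset.univ.filter (fun a : Fin n => a ≤ i) := by
      intro x
      ext a
      simp only [mem_filter, mem_univ, true_and, and_iff_left_iff_imp]
      intro _
      rw [Fin.le_def, hm]
      exact Nat.zero_le _
    rw [he u, he v]
  · rw [rank_eq hn hu i m (by omega), rank_eq hn hv i m (by omega)]
    have hi := i.isLt
    have hkn := k.isLt
    have hkl' : (l : ℕ) < (k : ℕ) := hkl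
    simp only [Fin.le_def]
    split_ifs <;> omega
lemma corner_iff {h : ℕ → ℕ} {j : ℕ} (hj : 2 ≤ j) (h0 : h 0 = 0)
    (h1 : j ≤ h j) (h2 : j - 1 ≤ h (j - 1)) :
    StairCorner h (j - 1) j ↔ (h (j - 2) = j - 2 ∧ h (j - 1) = j - 1 ∧ h j = j) := by
  unfold StairCorner hbar
  have e1 : j - 1 - 1 = j - 2 := by omega
  rw [e1]
  split_ifs <;> omega

end Stmt15


/-- Let n ≥ 2, h a Hessenberg function with modified Hessenberg
function h̄, and 2 ≤ j ≤ n. Then (j−1, j) is a corner of the modified Hessenberg stair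
shape iff there is no negative Hessenberg pair (k,ℓ) with w_{j−1,j} < w_{k,ℓ} in the
Bruhat order. Position p ∈ {1,…,n} is encoded as `⟨p-1,_⟩ : Fin n`. -/
theorem stmt_15 (n : ℕ) (hn : 2 ≤ n) (h : ℕ → ℕ) (h0 : h 0 = 0)
    (hmono : ∀ i j, 1 ≤ i → i ≤ j → j ≤ n → h i ≤ h j)
    (hdom : ∀ j, 1 ≤ j → j ≤ n → j ≤ h j ∧ h j ≤ n)
    (j : ℕ) (hj : 2 ≤ j) (hj' : j ≤ n)
    (u : Equiv.Perm (Fin n)) (hu : IsWij ⟨j - 2, by omega⟩ ⟨j - 1, by omega⟩ u) :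
    StairCorner h (j - 1) j ↔
      ¬ ∃ (k l : Fin n) (v : Equiv.Perm (Fin n)),
          NegPair h k l ∧ IsWij k l v ∧ BruhatLT u v := by
  have hcorner := Stmt15.corner_iff (h := h) hj h0 (hdom j (by omega) hj').1
    (hdom (j - 1) (by omega) (by omega)).1
  constructor
  · rintro hc ⟨k, l, v, ⟨hlk, hkh⟩, hvij, hble, -⟩
    obtain ⟨e2, e1, e0⟩ := hcorner.mp hc
    have hkn := k.isLt
    have hln := l.isLt
    have hlkv : (l : ℕ) < (k : ℕ) := hlk
    -- extract l ≤ j-1 (0-indexed)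
    have hlval : (l : ℕ) ≤ j - 1 := by
      have inst1 := hble ⟨j - 1, by omega⟩ ⟨n - 1, by omega⟩
      rw [Stmt15.rank_eq hn hu _ _ (by simp only []; omega), Stmt15.rank_eq hn hvij _ _ (by simp only []; omega)] at inst1
      simp only [Fin.le_def] at inst1
      by_contra hcon
      split_ifs at inst1 <;> omega
    -- extract k ≥ j-2 (0-indexed)
    have hkval : j - 2 ≤ (k : ℕ) := by
      have inst2 := hble k ⟨1, by omega⟩
      rw [Stmt15.rank_eq hn hu _ _ (by simp only []; omega), Stmt15.rank_eq hn hvij _ _ (by simp only []; omega)] at inst2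
      simp only [Fin.le_def] at inst2
      by_contra hcon
      split_ifs at inst2 <;> omega
    by_cases hL : (l : ℕ) + 1 ≤ j - 2
    · have := hmono ((l : ℕ) + 1) (j - 2) (by omega) hL (by omega)
      omega
    · have hE : (l : ℕ) + 1 = j - 1 ∨ (l : ℕ) + 1 = j := by omega
      rcases hE with hE | hE <;> rw [hE] at hkh <;> omega
  · intro hne
    by_contra hc
    apply hne
    have hnc : ¬(h (j - 2) = j - 2 ∧ h (j - 1) = j - 1 ∧ h j = j) :=
      fun hx => hc (hcorner.mpr hx)
    obtain ⟨L, K, hL1, hLj, hKj, hLK, hKh, hKn⟩ :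
        ∃ L K, 1 ≤ L ∧ L ≤ j ∧ j - 1 ≤ K ∧ L < K ∧ K ≤ h L ∧ K ≤ n := by
      by_cases hjj : h j = j
      · by_cases hj1 : h (j - 1) = j - 1
        · have hj2 : h (j - 2) ≠ j - 2 := fun hx => hnc ⟨hx, hj1, hjj⟩
          have hj3 : 3 ≤ j := by
            by_contra h3
            have : j = 2 := by omega
            subst this
            simp at hj2
            omega
          have hd := hdom (j - 2) (by omega) (by omega)
          exact ⟨j - 2, h (j - 2), by omega, by omega, by omega, by omega, le_refl _, hd.2⟩
        · have hd := hdom (j - 1) (by omega) (by omega)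
          exact ⟨j - 1, h (j - 1), by omega, by omega, by omega, by omega, le_refl _, hd.2⟩
      · have hd := hdom j (by omega) hj'
        exact ⟨j, h j, by omega, le_refl _, by omega, by omega, le_refl _, hd.2⟩
    set k : Fin n := ⟨K - 1, by omega⟩ with hkdef
    set l : Fin n := ⟨L - 1, by omega⟩ with hldef
    obtain ⟨v, hvij⟩ := Stmt15.exists_wij hn k l (Fin.ne_of_val_ne (by simp [hkdef, hldef]; omega))
    have hlk : l < k := by rw [Fin.lt_def]; simp [hkdef, hldef]; omega
    refine ⟨k, l, v, ⟨hlk, ?_⟩, hvij, ?_, ?_⟩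
    · show (K - 1 : ℕ) + 1 ≤ h ((L - 1 : ℕ) + 1)
      have e1 : (L - 1 : ℕ) + 1 = L := by omega
      rw [e1]; omega
    · exact Stmt15.bruhatLE_of hn hj hj' hlk (by simp [hldef]; omega) (by simp [hkdef]; omega)
        hu hvij
    · intro he
      have hk1 : k = (⟨j - 2, by omega⟩ : Fin n) := by
        have h1 : (u k : ℕ) = 0 := by rw [he]; exact hvij.1
        exact u.injective (Fin.val_injective (h1.trans hu.1.symm))
      have hl1 : l = (⟨j - 1, by omega⟩ : Fin n) := by
        have h1 : (u l : ℕ) = n - 1 := by rw [he]; exact hvij.2.1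
        exact u.injective (Fin.val_injective (h1.trans hu.2.1.symm))
      have hk2 : (k : ℕ) = j - 2 := by rw [hk1]
      have hl2 : (l : ℕ) = j - 1 := by rw [hl1]
      have hk3 : (k : ℕ) = K - 1 := rfl
      have hl3 : (l : ℕ) = L - 1 := rfl
      omega
end

section
/- Let n ≥ 2 and let h : {1,…,n} → {1,…,n} be a Hessenberg function. If (k,ℓ) is a minimal negative Hessenberg pair, then w_{k,ℓ} is a maximal element of Ω_H. -/
/-! In the Bruhat order, moving up can only push the value `1` to the right and the value `n`
to the left (count the values `≥ 2`, resp. `≥ n`, among the first few positions). So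
`w_{k,ℓ} ≤ w_{k',ℓ'}` forces `k ≤ k'` and `ℓ' ≤ ℓ`. With `ℓ < k` this rules out `k' < ℓ'`, and
minimality of `(k,ℓ)` forces `(k',ℓ') = (k,ℓ)`; finally `w_{k,ℓ}` is determined by `k` and `ℓ`,
since a permutation that is strictly decreasing off `{k,ℓ}` is determined by its values there. -/

theorem Equiv.Perm.eq_of_eqOn_compl_of_strictAntiOn {α : Type*} [LinearOrder α] [Finite α]
    {s : Set α} {w u : Equiv.Perm α} (heq : Set.EqOn w u sᶜ)
    (hw : StrictAntiOn w s) (hu : StrictAntiOn u s) : w = u := by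
  have hrange : Set.range (fun a : s => w a) = Set.range (fun a : s => u a) := by
    rw [← Set.image_eq_range, ← Set.image_eq_range, ← compl_compl (w '' s),
      ← Set.image_compl_eq w.bijective, heq.image_eq, Set.image_compl_eq u.bijective,
      compl_compl]
  have hrestrict := ((Set.strictAntiOn_iff_strictAnti.mp hw).range_inj
    (Set.strictAntiOn_iff_strictAnti.mp hu)).mp hrange
  ext1 a
  by_cases ha : a ∈ s
  · exact congrFun hrestrict ⟨a, ha⟩
  · exact heq ha

theorem IsWij.unique {n : ℕ} {i j : Fin n} {w u : Equiv.Perm (Fin n)}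
    (hw : IsWij i j w) (hu : IsWij i j u) : w = u := by
  refine Equiv.Perm.eq_of_eqOn_compl_of_strictAntiOn (s := {a | a ≠ i ∧ a ≠ j}) ?_ ?_ ?_
  · intro a ha
    rcases not_and_or.mp ha with hai | haj
    · rw [not_not.mp hai]; exact Fin.ext (hw.1.trans hu.1.symm)
    · rw [not_not.mp haj]; exact Fin.ext (hw.2.1.trans hu.2.1.symm)
  · exact fun a ha b hb hab => hw.2.2 a b hab ha.1 ha.2 hb.1 hb.2
  · exact fun a ha b hb hab => hu.2.2 a b hab ha.1 ha.2 hb.1 hb.2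

open Finset in
theorem BruhatLE.le_of_apply_val_eq_zero {n : ℕ} {u v : Equiv.Perm (Fin n)} (huv : BruhatLE u v)
    {a b : Fin n} (ha : (u a : ℕ) = 0) (hb : (v b : ℕ) = 0) : a ≤ b := by
  by_contra! hba
  have hn : 1 < n := by have := a.isLt; have : (b : ℕ) < a := hba; omega
  have one_le_iff (p : Equiv.Perm (Fin n)) {c : Fin n} (hc : (p c : ℕ) = 0) (d : Fin n) :
      ⟨1, hn⟩ ≤ p d ↔ d ≠ c := by
    rw [Fin.le_def, ← p.injective.ne_iff, Ne, Fin.ext_iff, hc, Fin.val_mk]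
    omega
  have hsub : univ.filter (fun a' => a' ≤ b ∧ ⟨1, hn⟩ ≤ v a') ⊂
      univ.filter (fun a' => a' ≤ b ∧ ⟨1, hn⟩ ≤ u a') := by
    refine (ssubset_iff_of_subset fun a' => ?_).mpr ⟨b, ?_, ?_⟩
    · simp only [mem_filter, mem_univ, true_and, one_le_iff u ha]
      exact fun ⟨ha'b, _⟩ => ⟨ha'b, (ha'b.trans_lt hba).ne⟩
    · simp only [mem_filter, mem_univ, true_and, one_le_iff u ha]
      exact ⟨le_rfl, hba.ne⟩
    · simp [one_le_iff v hb]
  exact (card_lt_card hsub).not_ge (huv b ⟨1, hn⟩)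

open Finset in
theorem BruhatLE.le_of_apply_val_eq_sub_one {n : ℕ} {u v : Equiv.Perm (Fin n)}
    (huv : BruhatLE u v) {a b : Fin n} (ha : (u a : ℕ) = n - 1) (hb : (v b : ℕ) = n - 1) :
    b ≤ a := by
  by_contra! hab
  have hu : 0 < #{a' | a' ≤ a ∧ v b ≤ u a'} :=
    card_pos.mpr ⟨a, mem_filter.mpr ⟨mem_univ a, le_rfl, Fin.le_def.mpr (by omega)⟩⟩
  have hv : #{a' | a' ≤ a ∧ v b ≤ v a'} = 0 := by
    refine card_eq_zero.mpr (filter_eq_empty_iff.mpr fun a' _ ⟨ha', hva'⟩ => ?_)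
    have : v a' = v b := Fin.ext (by have := (v a').isLt; rw [Fin.le_def] at hva'; omega)
    exact (ha'.trans_lt hab).ne (v.injective this)
  exact absurd (huv a (v b)) (by omega)

theorem stmt_17_general (n : ℕ) (h : ℕ → ℕ)
    (k l : Fin n) (hmin : MinNegPair h k l)
    (w : Equiv.Perm (Fin n)) (hw : IsWij k l w) :
    MaxInOmega h w := by
  obtain ⟨hneg, hminimal⟩ := hmin
  refine ⟨⟨k, l, Or.inr hneg, hw⟩, ?_⟩
  rintro u ⟨k', l', hpair, hu⟩ ⟨hle, hne⟩
  have hk : k ≤ k' := hle.le_of_apply_val_eq_zero hw.1 hu.1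
  have hl : l' ≤ l := hle.le_of_apply_val_eq_sub_one hw.2.1 hu.2.1
  rcases hpair with hlt | hneg'
  · exact lt_asymm hneg.1 (hk.trans_lt (hlt.trans_le hl))
  · obtain ⟨rfl, rfl⟩ := hminimal k' l' hneg' hk hl
    exact hne (hw.unique hu)

/-- Let n ≥ 2 and h a Hessenberg function. If (k,ℓ) is a minimal
negative Hessenberg pair, then w_{k,ℓ} is a maximal element of Ω_H. -/
theorem stmt_17 (n : ℕ) (hn : 2 ≤ n) (h : ℕ → ℕ)
    (hmono : ∀ i j, 1 ≤ i → i ≤ j → j ≤ n → h i ≤ h j)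
    (hdom : ∀ j, 1 ≤ j → j ≤ n → j ≤ h j ∧ h j ≤ n)
    (k l : Fin n) (hmin : MinNegPair h k l)
    (w : Equiv.Perm (Fin n)) (hw : IsWij k l w) :
    MaxInOmega h w :=
  stmt_17_general n h k l hmin w hw
end
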